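/- Let G = G₁G₂ be a product of proper subgroups G₁, G₂ with N = G₁ ∩ G₂, and let Xᵢ ⊆ Gᵢ (i=1,2) be semiregular RDSs with common forbidden subgroup N, |N| = n, and parameters (nλᵢ, n, nλᵢ, λᵢ). If X₁ is i-commuting, then X₁X₂ is a semiregular RDS in G with forbidden subgroup N and parameters (n²λ₁λ₂, n, n²λ₁λ₂, nλ₁λ₂). -/

import Mathlib

/-!
Comparing coefficients on `N \ {1}` in `X₁⁻¹X₁ = X₁X₁⁻¹` shows that `x⁻¹x' ∉ G₂` for distinct
`x, x' ∈ X₁`, so `(x, y) ↦ xy` is injective on `X₁ × G₂`. Hence the group-ring sums multiply like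
the sets: `X₁X₂`, `X₁N = G₁` (by counting) and `X₁G₂ = G` (as `G = G₁G₂`); in particular
`|G : N| = |G : G₂| |G₂ : N| = |X₁| |X₂|`. Finally
`(X₁X₂)(X₁X₂)⁻¹ = X₁(X₂X₂⁻¹)X₁⁻¹ = nλ₂ X₁X₁⁻¹ + λ₂ (X₁G₂X₁⁻¹ - X₁NX₁⁻¹)
  = nλ₂ X₁X₁⁻¹ + nλ₁λ₂ (G - G₁)`, which expands to the claimed identity.
-/

open Finset MonoidAlgebra Pointwise

/-- The element of the integral group ring `ℤG` given by the sum of the elements of `X`. -/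
noncomputable def gsum {G : Type*} [Group G] (X : Finset G) : MonoidAlgebra ℤ G :=
  ∑ x ∈ X, MonoidAlgebra.single x (1 : ℤ)

section GroupRing

variable {G : Type*} [Group G] [DecidableEq G]

lemma coeff_gsum (X : Finset G) (g : G) : (gsum X).coeff g = if g ∈ X then 1 else 0 := by
  simp only [gsum, coeff_sum, Finsupp.finsetSum_apply, coeff_single, Finsupp.single_apply]
  exact sum_ite_eq' X g fun _ => 1

omit [DecidableEq G] in
lemma gsum_mul_gsum (s t : Finset G) :
    gsum s * gsum t = ∑ p ∈ s ×ˢ t, single (p.1 * p.2) (1 : ℤ) := by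
  simp only [gsum, sum_mul_sum, single_mul_single, one_mul, sum_product]

lemma one_le_coeff_gsum_mul_gsum {s t : Finset G} {a b : G} (ha : a ∈ s) (hb : b ∈ t) :
    1 ≤ (gsum s * gsum t).coeff (a * b) := by
  rw [gsum_mul_gsum, coeff_sum, Finsupp.finsetSum_apply]
  simp only [coeff_single, Finsupp.single_apply]
  simpa using single_le_sum (f := fun p : G × G => if p.1 * p.2 = a * b then (1 : ℤ) else 0)
    (fun _ _ => by positivity) (mem_product.mpr ⟨ha, hb⟩ : (a, b) ∈ s ×ˢ t)

lemma gsum_mul_gsum_of_card_mul {s t : Finset G} (h : #(s * t) = #s * #t) :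
    gsum s * gsum t = gsum (s * t) := by
  rw [gsum_mul_gsum, Finset.mul_def, gsum, sum_image]
  simpa only [coe_product] using card_mul_iff.mp h

lemma gsum_mul_gsum_of_mul_mem {s t : Finset G} (h : ∀ a ∈ s, ∀ b ∈ t, a * b ∈ s) :
    gsum s * gsum t = #t • gsum s := by
  have himage : ∀ b ∈ t, s.image (· * b) = s := fun b hb =>
    eq_of_subset_of_card_le (image_subset_iff.mpr fun a ha => h a ha b hb)
      (card_image_of_injective _ (mul_left_injective b)).ge
  calc gsum s * gsum t = ∑ b ∈ t, gsum (s.image (· * b)) := by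
        simp only [gsum, sum_mul_sum, single_mul_single, one_mul, sum_comm (s := s),
          sum_image fun x _ y _ hxy => mul_right_cancel hxy]
    _ = #t • gsum s := by rw [sum_congr rfl fun b hb => by rw [himage b hb], sum_const]

lemma card_inv_mul_inv (s t : Finset G) : #(t⁻¹ * s⁻¹) = #(s * t) := by
  rw [← mul_inv_rev, card_inv]

lemma gsum_mul_mul_gsum_inv {X Y : Finset G} (hcard : #(X * Y) = #X * #Y) :
    gsum (X * Y) * gsum (X * Y)⁻¹ = gsum X * (gsum Y * gsum Y⁻¹) * gsum X⁻¹ := by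
  have hcard' : #(Y⁻¹ * X⁻¹) = #Y⁻¹ * #X⁻¹ := by
    rw [card_inv_mul_inv, hcard, card_inv, card_inv, mul_comm]
  rw [mul_inv_rev, ← gsum_mul_gsum_of_card_mul hcard, ← gsum_mul_gsum_of_card_mul hcard']
  simp only [mul_assoc]

lemma gsum_mul_gsum_mul_gsum_inv {X S T : Finset G} (hcard : #(X * S) = #X * #S) (hXS : X * S = T)
    (hT : ∀ a ∈ T, ∀ x ∈ X, a * x⁻¹ ∈ T) : gsum X * gsum S * gsum X⁻¹ = #X • gsum T := by
  rw [gsum_mul_gsum_of_card_mul hcard, hXS, gsum_mul_gsum_of_mul_mem, card_inv]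
  intro a ha y hy
  obtain ⟨x, hx, rfl⟩ := mem_inv.mp hy
  exact hT a ha x hx

end GroupRing

section Subgroups

variable {G : Type*} [Group G] [DecidableEq G]

lemma card_mul_of_inv_mul_mem {X Y : Finset G} {K : Subgroup G}
    (hX : ∀ x ∈ X, ∀ x' ∈ X, x⁻¹ * x' ∈ K → x = x') (hY : ∀ y ∈ Y, y ∈ K) :
    #(X * Y) = #X * #Y := by
  refine card_mul_iff.mpr fun p hp q hq hpq => ?_
  simp only [Set.mem_prod, mem_coe] at hp hq hpq
  have hquot : q.1⁻¹ * p.1 = q.2 * p.2⁻¹ := by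
    rw [inv_mul_eq_iff_eq_mul, ← mul_assoc, eq_mul_inv_iff_mul_eq, hpq]
  have h1 : q.1 = p.1 := hX _ hq.1 _ hp.1 (hquot ▸ K.mul_mem (hY _ hq.2) (K.inv_mem (hY _ hp.2)))
  exact Prod.ext h1.symm (mul_left_cancel (hpq.trans (by rw [h1])))

variable [Fintype G]

lemma mul_eq_one_of_gsum_mul_gsum_eq {H N : Subgroup G} [DecidablePred (· ∈ H)]
    [DecidablePred (· ∈ N)] (hNH : N ≤ H) {s t : Finset G} {k l : ℕ}
    (h : gsum s * gsum t = k • (1 : MonoidAlgebra ℤ G) +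
      l • (gsum (univ.filter (· ∈ H)) - gsum (univ.filter (· ∈ N))))
    {a b : G} (ha : a ∈ s) (hb : b ∈ t) (hab : a * b ∈ N) : a * b = 1 := by
  by_contra hne
  -- the right-hand side of `h` has coefficient `0` on `N \ {1}`
  have hcoeff := one_le_coeff_gsum_mul_gsum ha hb
  simp only [h, coeff_add, coeff_smul, coeff_sub, Finsupp.add_apply, Finsupp.smul_apply,
    Finsupp.sub_apply, coeff_gsum, one_def, coeff_single, Finsupp.single_apply] at hcoeff
  simp [hab, hNH hab, Ne.symm hne] at hcoeff

lemma eq_of_inv_mul_mem_of_gsum_inv_mul_gsum_eq {H K N : Subgroup G} [DecidablePred (· ∈ H)]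
    [DecidablePred (· ∈ N)] (hN : N = H ⊓ K) {X : Finset G} (hXH : ∀ x ∈ X, x ∈ H) {k l : ℕ}
    (h : gsum X⁻¹ * gsum X = k • (1 : MonoidAlgebra ℤ G) +
      l • (gsum (univ.filter (· ∈ H)) - gsum (univ.filter (· ∈ N))))
    {x x' : G} (hx : x ∈ X) (hx' : x' ∈ X) (hK : x⁻¹ * x' ∈ K) : x = x' :=
  inv_mul_eq_one.mp <| mul_eq_one_of_gsum_mul_gsum_eq (hN ▸ inf_le_left) h (inv_mem_inv hx) hx'
    (hN ▸ ⟨H.mul_mem (H.inv_mem (hXH x hx)) (hXH x' hx'), hK⟩)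

omit [DecidableEq G] in
lemma card_filter_mem (H : Subgroup G) [DecidablePred (· ∈ H)] :
    #(univ.filter (· ∈ H)) = Nat.card H := by
  rw [Nat.card_eq_fintype_card, Fintype.card_subtype]

lemma mul_filter_mem_eq_filter_mem {H N : Subgroup G} [DecidablePred (· ∈ H)]
    [DecidablePred (· ∈ N)] (hNH : N ≤ H) {X : Finset G} (hXH : ∀ x ∈ X, x ∈ H)
    (hcard : #(X * univ.filter (· ∈ N)) = #X * #(univ.filter (· ∈ N)))
    (hX : #X = Nat.card (H ⧸ N.subgroupOf H)) :
    X * univ.filter (· ∈ N) = univ.filter (· ∈ H) := by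
  refine eq_of_subset_of_card_le (fun g hg => ?_) ?_
  · obtain ⟨x, hx, m, hm, rfl⟩ := mem_mul.mp hg
    simpa using H.mul_mem (hXH x hx) (hNH (mem_filter.mp hm).2)
  · rw [hcard, card_filter_mem, card_filter_mem, hX,
      ← Nat.card_congr (Subgroup.subgroupOfEquivOfLe hNH).toEquiv,
      ← Subgroup.card_eq_card_quotient_mul_card_subgroup]

lemma mul_filter_mem_eq_univ {H K N : Subgroup G} [DecidablePred (· ∈ H)]
    [DecidablePred (· ∈ K)] [DecidablePred (· ∈ N)] (hHK : ∀ g : G, ∃ h ∈ H, ∃ k ∈ K, g = h * k)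
    (hNK : N ≤ K) {X : Finset G} (hXN : X * univ.filter (· ∈ N) = univ.filter (· ∈ H)) :
    X * univ.filter (· ∈ K) = univ := by
  refine eq_univ_of_forall fun g => ?_
  obtain ⟨h, hh, k, hk, rfl⟩ := hHK g
  obtain ⟨x, hx, m, hm, rfl⟩ := mem_mul.mp (hXN ▸ mem_filter.mpr ⟨mem_univ h, hh⟩)
  rw [mul_assoc]
  exact mul_mem_mul hx (mem_filter.mpr ⟨mem_univ _, K.mul_mem (hNK (mem_filter.mp hm).2) hk⟩)

lemma index_eq_card_of_mul_filter_mem_eq_univ {K : Subgroup G} [DecidablePred (· ∈ K)]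
    {X : Finset G} (hXK : X * univ.filter (· ∈ K) = univ)
    (hcard : #(X * univ.filter (· ∈ K)) = #X * #(univ.filter (· ∈ K))) : K.index = #X := by
  refine Nat.eq_of_mul_eq_mul_right (Nat.card_pos (α := K)) ?_
  rw [Subgroup.index_mul_card, ← card_filter_mem, ← hcard, hXK, card_univ,
    Nat.card_eq_fintype_card]

end Subgroups

theorem stmt5_general {G : Type*} [Group G] [Fintype G] [DecidableEq G]
    (G1 G2 : Subgroup G) [DecidablePred (· ∈ G1)] [DecidablePred (· ∈ G2)]
    (hprod : ∀ g : G, ∃ g1 ∈ G1, ∃ g2 ∈ G2, g = g1 * g2)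
    (N : Subgroup G) [DecidablePred (· ∈ N)] (hN : N = G1 ⊓ G2)
    (n l1 l2 : ℕ)
    (X1 X2 : Finset G) (hX1sub : ∀ x ∈ X1, x ∈ G1) (hX2sub : ∀ x ∈ X2, x ∈ G2)
    (hX1card : X1.card = n * l1) (hX2card : X2.card = n * l2)
    (hX1semi : X1.card = Nat.card (G1 ⧸ N.subgroupOf G1))
    (hX2semi : X2.card = Nat.card (G2 ⧸ N.subgroupOf G2))
    (hX1 : gsum X1 * gsum (X1.image (·⁻¹)) =
      (n * l1) • (1 : MonoidAlgebra ℤ G) +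
      l1 • (gsum (Finset.univ.filter (· ∈ G1)) - gsum (Finset.univ.filter (· ∈ N))))
    (hX2 : gsum X2 * gsum (X2.image (·⁻¹)) =
      (n * l2) • (1 : MonoidAlgebra ℤ G) +
      l2 • (gsum (Finset.univ.filter (· ∈ G2)) - gsum (Finset.univ.filter (· ∈ N))))
    (hicomm : gsum X1 * gsum (X1.image (·⁻¹)) = gsum (X1.image (·⁻¹)) * gsum X1) :
    (X1 * X2).card = n ^ 2 * l1 * l2 ∧
      (X1 * X2).card = N.index ∧
      gsum (X1 * X2) * gsum ((X1 * X2).image (·⁻¹)) =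
        (n ^ 2 * l1 * l2) • (1 : MonoidAlgebra ℤ G) +
        (n * l1 * l2) • (gsum (Finset.univ : Finset G) - gsum (Finset.univ.filter (· ∈ N))) := by
  simp only [image_inv_eq_inv] at hX1 hX2 hicomm ⊢
  have hNG1 : N ≤ G1 := hN ▸ inf_le_left
  have hNG2 : N ≤ G2 := hN ▸ inf_le_right
  have hcard (Y : Finset G) (hY : ∀ y ∈ Y, y ∈ G2) : #(X1 * Y) = #X1 * #Y :=
    card_mul_of_inv_mul_mem
      (fun _ hx _ hx' => eq_of_inv_mul_mem_of_gsum_inv_mul_gsum_eq hN hX1sub (hicomm ▸ hX1) hx hx')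
      hY
  have hcardN := hcard (univ.filter (· ∈ N)) fun _ hm => hNG2 (mem_filter.mp hm).2
  have hcardG2 := hcard (univ.filter (· ∈ G2)) fun _ hg => (mem_filter.mp hg).2
  have hX1N := mul_filter_mem_eq_filter_mem hNG1 hX1sub hcardN hX1semi
  have hX1G2 := mul_filter_mem_eq_univ hprod hNG2 hX1N
  refine ⟨by rw [hcard X2 hX2sub, hX1card, hX2card]; ring, ?_, ?_⟩
  · calc #(X1 * X2) = #X2 * #X1 := by rw [hcard X2 hX2sub, mul_comm]
      _ = N.relIndex G2 * G2.index := by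
        rw [hX2semi, index_eq_card_of_mul_filter_mem_eq_univ hX1G2 hcardG2]; rfl
      _ = N.index := Subgroup.relIndex_mul_index hNG2
  · have hG1 : ∀ a ∈ univ.filter (· ∈ G1), ∀ x ∈ X1, a * x⁻¹ ∈ univ.filter (· ∈ G1) :=
      fun _ ha x hx => by simpa using G1.mul_mem (mem_filter.mp ha).2 (G1.inv_mem (hX1sub x hx))
    rw [gsum_mul_mul_gsum_inv (hcard X2 hX2sub), hX2]
    simp only [mul_add, add_mul, mul_sub, sub_mul, mul_smul_comm, smul_mul_assoc, mul_one]
    rw [hX1, gsum_mul_gsum_mul_gsum_inv hcardG2 hX1G2 fun _ _ _ _ => mem_univ _,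
      gsum_mul_gsum_mul_gsum_inv hcardN hX1N hG1, hX1card]
    module

/-- Product construction: if `G = G₁G₂` with `N = G₁ ∩ G₂`, `Xᵢ ⊆ Gᵢ` are semiregular RDSs
with common forbidden subgroup `N`, `|N| = n`, parameters `(nλᵢ, n, nλᵢ, λᵢ)`, and `X₁` is
i-commuting, then `X₁X₂` is a semiregular RDS in `G` with forbidden subgroup `N` and
parameters `(n²λ₁λ₂, n, n²λ₁λ₂, nλ₁λ₂)`. -/
theorem stmt5 {G : Type*} [Group G] [Fintype G] [DecidableEq G]
    (G1 G2 : Subgroup G) [DecidablePred (· ∈ G1)] [DecidablePred (· ∈ G2)]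
    (hG1 : G1 ≠ ⊤) (hG2 : G2 ≠ ⊤)
    (hprod : ∀ g : G, ∃ g1 ∈ G1, ∃ g2 ∈ G2, g = g1 * g2)
    (N : Subgroup G) [DecidablePred (· ∈ N)] (hN : N = G1 ⊓ G2)
    (n l1 l2 : ℕ) (hn : Nat.card N = n) (hl1 : 0 < l1) (hl2 : 0 < l2)
    (X1 X2 : Finset G) (hX1sub : ∀ x ∈ X1, x ∈ G1) (hX2sub : ∀ x ∈ X2, x ∈ G2)
    (hX1card : X1.card = n * l1) (hX2card : X2.card = n * l2)
    (hX1semi : X1.card = Nat.card (G1 ⧸ N.subgroupOf G1))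
    (hX2semi : X2.card = Nat.card (G2 ⧸ N.subgroupOf G2))
    (hX1 : gsum X1 * gsum (X1.image (·⁻¹)) =
      (n * l1) • (1 : MonoidAlgebra ℤ G) +
      l1 • (gsum (Finset.univ.filter (· ∈ G1)) - gsum (Finset.univ.filter (· ∈ N))))
    (hX2 : gsum X2 * gsum (X2.image (·⁻¹)) =
      (n * l2) • (1 : MonoidAlgebra ℤ G) +
      l2 • (gsum (Finset.univ.filter (· ∈ G2)) - gsum (Finset.univ.filter (· ∈ N))))
    (hicomm : gsum X1 * gsum (X1.image (·⁻¹)) = gsum (X1.image (·⁻¹)) * gsum X1) :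
    (X1 * X2).card = n ^ 2 * l1 * l2 ∧
      (X1 * X2).card = N.index ∧
      gsum (X1 * X2) * gsum ((X1 * X2).image (·⁻¹)) =
        (n ^ 2 * l1 * l2) • (1 : MonoidAlgebra ℤ G) +
        (n * l1 * l2) • (gsum (Finset.univ : Finset G) - gsum (Finset.univ.filter (· ∈ N))) :=
  stmt5_general G1 G2 hprod N hN n l1 l2 X1 X2 hX1sub hX2sub hX1card hX2card hX1semi hX2semi hX1 hX2
    hicomm
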